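/- For unit-norm φ, ψ ∈ A(D) with c(φ,ψ) = Re ∫_D (\bar{φ}/|φ|)ψ dxdy, one has c(φ,ψ) = 1 if and only if ψ = φ almost everywhere. Hence the angle between two distinct Teichmüller geodesic directions is strictly positive. -/

import Mathlib

open MeasureTheory Complex

noncomputable section

/-- The open unit disk in ℂ. -/
def 𝔻 : Set ℂ := Metric.ball 0 1

/-- Planar Lebesgue measure restricted to the unit disk. -/
def vD : MeasureTheory.Measure ℂ := MeasureTheory.volume.restrict 𝔻

/-- `A(D)`: holomorphic on the disk and integrable there. -/
def AD (φ : ℂ → ℂ) : Prop := DifferentiableOn ℂ φ 𝔻 ∧ MeasureTheory.Integrable φ vD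

/-- L¹ norm over the disk. -/
def nrm (φ : ℂ → ℂ) : ℝ := ∫ z, ‖φ z‖ ∂vD

/-- Pairing Re ∫_D μ φ. -/
def pair (μ φ : ℂ → ℂ) : ℝ := (∫ z, μ z * φ z ∂vD).re

/-- Infinitesimal Teichmüller norm. -/
def lam (μ : ℂ → ℂ) : ℝ := sSup {r : ℝ | ∃ φ, AD φ ∧ nrm φ = 1 ∧ r = pair μ φ}

/-- Unit Teichmüller differential `conj φ / |φ|`. -/
def tmu (φ : ℂ → ℂ) (z : ℂ) : ℂ := (starRingEnd ℂ) (φ z) / ((‖φ z‖ : ℝ) : ℂ)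

/-- Cosine of the angle between geodesic directions. -/
def ang (φ ψ : ℂ → ℂ) : ℝ := (∫ z, tmu φ z * ψ z ∂vD).re

end

/-!
If `c(φ, ψ) = 1 = ‖ψ‖₁`, then `∫ (‖ψ‖ - Re (tmu φ · ψ)) = 0` with a nonnegative integrand, so
`tmu φ · ψ` is a.e. a nonnegative real, i.e. `conj φ · ψ` is a.e. real. By continuity it is real on
the whole disk, so the holomorphic quotient `ψ / φ` is real-valued near a zero-free point of `φ`.
The open mapping theorem makes it locally constant, and the identity theorem gives `ψ = c φ` with
`c` real; then `c(φ, ψ) = c ‖φ‖₁ = c` forces `c = 1`.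
-/

open MeasureTheory Complex Filter Topology Set
open scoped ComplexOrder

theorem AnalyticAt.eventually_eq_of_eventually_im_eq_zero {E : Type*} [NormedAddCommGroup E]
    [NormedSpace ℂ E] {f : E → ℂ} {z₀ : E} (hf : AnalyticAt ℂ f z₀)
    (h : ∀ᶠ z in 𝓝 z₀, (f z).im = 0) : ∀ᶠ z in 𝓝 z₀, f z = f z₀ := by
  refine hf.eventually_constant_or_nhds_le_map_nhds.resolve_right fun hle => ?_
  have hreal : im ⁻¹' {0} ∈ 𝓝 (f z₀) := hle h
  rw [← mem_interior_iff_mem_nhds, interior_preimage_im, interior_singleton] at hreal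
  exact hreal

theorem Complex.im_div_eq_im_conj_mul_div_normSq (a b : ℂ) :
    (b / a).im = ((starRingEnd ℂ) a * b).im / normSq a := by
  simp only [div_im, mul_im, conj_re, conj_im]
  ring

theorem exists_eqOn_ofReal_mul_of_im_conj_mul_eq_zero {U : Set ℂ} (hU : IsOpen U)
    (hUc : IsPreconnected U) {φ ψ : ℂ → ℂ} (hφ : DifferentiableOn ℂ φ U)
    (hψ : DifferentiableOn ℂ ψ U) {z₀ : ℂ} (hz₀ : z₀ ∈ U) (hφz₀ : φ z₀ ≠ 0)
    (him : ∀ z ∈ U, ((starRingEnd ℂ) (φ z) * ψ z).im = 0) :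
    ∃ c : ℝ, EqOn ψ (fun z => c * φ z) U := by
  have hφa := hφ.analyticOnNhd hU
  have hψa := hψ.analyticOnNhd hU
  have hquot : ∀ᶠ z in 𝓝 z₀, (ψ z / φ z).im = 0 := by
    filter_upwards [hU.mem_nhds hz₀] with z hz
    rw [im_div_eq_im_conj_mul_div_normSq, him z hz, zero_div]
  have hconst :=
    ((hψa z₀ hz₀).div (hφa z₀ hz₀) hφz₀).eventually_eq_of_eventually_im_eq_zero hquot
  have hreal : (((ψ z₀ / φ z₀).re : ℝ) : ℂ) = ψ z₀ / φ z₀ :=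
    Complex.ext (by simp) (by simp [hquot.self_of_nhds])
  refine ⟨(ψ z₀ / φ z₀).re, hψa.eqOn_of_preconnected_of_eventuallyEq
    (fun z hz => analyticAt_const.mul (hφa z hz)) hUc hz₀ ?_⟩
  filter_upwards [hconst, (hφa z₀ hz₀).continuousAt.eventually_ne hφz₀] with z hz hne
  rw [hreal, ← Pi.div_apply, ← hz, Pi.div_apply, div_mul_cancel₀ _ hne]

theorem ae_nonneg_of_re_integral_eq_integral {α : Type*} [MeasurableSpace α] {μ : Measure α}
    {f : α → ℂ} {g : α → ℝ} (hf : Integrable f μ) (hg : Integrable g μ)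
    (hfg : ∀ᵐ x ∂μ, ‖f x‖ ≤ g x) (h : (∫ x, f x ∂μ).re = ∫ x, g x ∂μ) :
    ∀ᵐ x ∂μ, 0 ≤ f x := by
  have hfre : Integrable (fun x => (f x).re) μ := hf.re
  have hzero : ∫ x, (g x - (f x).re) ∂μ = 0 := by
    have hre : ∫ x, (f x).re ∂μ = (∫ x, f x ∂μ).re := integral_re hf
    rw [integral_sub hg hfre, hre, h, sub_self]
  have hgap : ∀ᵐ x ∂μ, 0 ≤ g x - (f x).re :=
    hfg.mono fun x hx => sub_nonneg.2 ((re_le_norm _).trans hx)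
  filter_upwards [(integral_eq_zero_iff_of_nonneg_ae hgap (hg.sub hfre)).1 hzero, hfg]
    with x hx hxg
  have hre : (f x).re = g x := (sub_eq_zero.1 hx).symm
  exact re_eq_norm.1 (le_antisymm (re_le_norm _) (hre ▸ hxg))

theorem norm_tmu_le (φ : ℂ → ℂ) (z : ℂ) : ‖tmu φ z‖ ≤ 1 := by
  rcases eq_or_ne (φ z) 0 with h | h
  · simp [tmu, h]
  · rw [tmu, norm_div, norm_conj, norm_real, Real.norm_of_nonneg (norm_nonneg _),
      div_self (norm_ne_zero_iff.2 h)]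

theorem norm_tmu_mul_le (φ : ℂ → ℂ) (z w : ℂ) : ‖tmu φ z * w‖ ≤ ‖w‖ := by
  simpa [norm_mul] using mul_le_mul_of_nonneg_right (norm_tmu_le φ z) (norm_nonneg w)

theorem tmu_mul_self (φ : ℂ → ℂ) (z : ℂ) : tmu φ z * φ z = ‖φ z‖ := by
  rcases eq_or_ne (φ z) 0 with h | h
  · simp [tmu, h]
  · have hn : ((‖φ z‖ : ℝ) : ℂ) ≠ 0 := ofReal_ne_zero.2 (norm_ne_zero_iff.2 h)
    rw [tmu, div_mul_eq_mul_div, conj_mul', div_eq_iff hn, sq]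

theorem im_conj_mul_eq_zero_of_nonneg_tmu_mul {φ : ℂ → ℂ} {z w : ℂ} (h : 0 ≤ tmu φ z * w) :
    ((starRingEnd ℂ) (φ z) * w).im = 0 := by
  have him : (tmu φ z * w).im = ((starRingEnd ℂ) (φ z) * w).im / ‖φ z‖ := by
    rw [tmu, div_mul_eq_mul_div, div_ofReal_im]
  rw [(nonneg_iff.1 h).2.symm, eq_comm, div_eq_zero_iff] at him
  rcases him with him | hφ
  · exact him
  · simp [norm_eq_zero.1 hφ]

theorem MeasureTheory.AEStronglyMeasurable.tmu {μ : Measure ℂ} {φ : ℂ → ℂ}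
    (hφ : AEStronglyMeasurable φ μ) : AEStronglyMeasurable (tmu φ) μ :=
  ((continuous_conj.measurable.div (continuous_ofReal.comp continuous_norm).measurable)
    |>.comp_aemeasurable hφ.aemeasurable).aestronglyMeasurable

theorem MeasureTheory.Integrable.tmu_mul {μ : Measure ℂ} {φ ψ : ℂ → ℂ}
    (hφ : AEStronglyMeasurable φ μ) (hψ : Integrable ψ μ) :
    Integrable (fun z => tmu φ z * ψ z) μ :=
  hψ.mono (hφ.tmu.mul hψ.aestronglyMeasurable) (ae_of_all _ fun z => norm_tmu_mul_le φ z (ψ z))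

theorem ang_congr_ae (φ : ℂ → ℂ) {ψ ψ' : ℂ → ℂ} (h : ψ =ᵐ[vD] ψ') : ang φ ψ = ang φ ψ' := by
  rw [ang, ang, integral_congr_ae (h.mono fun z hz => by rw [hz])]

theorem ang_ofReal_mul_self (φ : ℂ → ℂ) (c : ℝ) : ang φ (fun z => c * φ z) = c * nrm φ := by
  have hpt : ∀ z, tmu φ z * (c * φ z) = ((c * ‖φ z‖ : ℝ) : ℂ) := fun z => by
    rw [mul_left_comm, tmu_mul_self, ofReal_mul]
  simp only [ang, hpt, integral_complex_ofReal, ofReal_re, integral_const_mul, nrm]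

theorem ang_self (φ : ℂ → ℂ) : ang φ φ = nrm φ := by
  simpa using ang_ofReal_mul_self φ 1

theorem exists_mem_ne_zero_of_nrm_ne_zero {φ : ℂ → ℂ} (h : nrm φ ≠ 0) : ∃ z ∈ 𝔻, φ z ≠ 0 := by
  contrapose! h
  exact setIntegral_eq_zero_of_forall_eq_zero fun z hz => by simp [h z hz]

/-- c(φ,ψ) = 1 iff ψ = φ a.e. -/
theorem stmt6 (φ ψ : ℂ → ℂ) (hφ : AD φ) (hψ : AD ψ)
    (hnφ : nrm φ = 1) (hnψ : nrm ψ = 1) :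
    ang φ ψ = 1 ↔ (∀ᵐ z ∂vD, ψ z = φ z) := by
  constructor
  · intro h
    have hnonneg : ∀ᵐ z ∂vD, 0 ≤ tmu φ z * ψ z :=
      ae_nonneg_of_re_integral_eq_integral (hψ.2.tmu_mul hφ.2.aestronglyMeasurable) hψ.2.norm
        (ae_of_all _ fun z => norm_tmu_mul_le φ z (ψ z))
        (by rw [← ang, h, ← hnψ, nrm])
    have him : ∀ z ∈ 𝔻, ((starRingEnd ℂ) (φ z) * ψ z).im = 0 :=
      Measure.eqOn_open_of_ae_eq (hnonneg.mono fun z => im_conj_mul_eq_zero_of_nonneg_tmu_mul)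
        Metric.isOpen_ball
        (continuous_im.comp_continuousOn
          ((continuous_conj.comp_continuousOn hφ.1.continuousOn).mul hψ.1.continuousOn))
        continuousOn_const
    obtain ⟨z₀, hz₀, hφz₀⟩ := exists_mem_ne_zero_of_nrm_ne_zero (hnφ ▸ one_ne_zero)
    obtain ⟨c, hc⟩ := exists_eqOn_ofReal_mul_of_im_conj_mul_eq_zero Metric.isOpen_ball
      (convex_ball 0 1).isPreconnected hφ.1 hψ.1 hz₀ hφz₀ him
    have hcψ : ψ =ᵐ[vD] fun z => c * φ z := ae_restrict_of_forall_mem measurableSet_ball hc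
    have hc1 : c = 1 := by rwa [ang_congr_ae φ hcψ, ang_ofReal_mul_self, hnφ, mul_one] at h
    filter_upwards [hcψ] with z hz
    rw [hz, hc1, ofReal_one, one_mul]
  · intro h
    rw [ang_congr_ae φ h, ang_self, hnφ]
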